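/- arXiv:math-ph/0511090 — 8 statements merged into one kernel-verified Lean document; each statement's English description precedes it below -/
import Mathlib

section
/- Let f and g be non-negative operator concave (in fact, it suffices to assume jointly concave in the matrix functional calculus sense for a fixed matrix size) functions of k real variables defined on a convex domain D in R^k. Then the function F(t_1,...,t_k) = f(t_1,...,t_k)^{1/2} g(t_1,...,t_k)^{1/2} is also operator concave on D. -/
open Matrix
open scoped ComplexOrder

/-- The multivariate functional calculus `f(A_1,…,A_k)` acting on the tensor product,
defined via spectral decompositions: `∑_m f(λ_{m₁},…,λ_{m_k}) P_{m₁} ⊗ ⋯ ⊗ P_{m_k}`. -/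
noncomputable def mvFun {k : ℕ} {n : Fin k → ℕ} (f : (Fin k → ℝ) → ℝ)
    {A : ∀ i, Matrix (Fin (n i)) (Fin (n i)) ℂ} (hA : ∀ i, (A i).IsHermitian) :
    Matrix (∀ i, Fin (n i)) (∀ i, Fin (n i)) ℂ :=
  ∑ m : ∀ i, Fin (n i),
    (f (fun i => (hA i).eigenvalues (m i)) : ℂ) •
      Matrix.of (fun a b => ∏ i,
        ((hA i).eigenvectorBasis (m i) (a i)) * star ((hA i).eigenvectorBasis (m i) (b i)))

/-- `f` is matrix concave of order `(n 0, …, n (k-1))` on the convex domain `D`. -/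
def MatrixConcaveOn {k : ℕ} (n : Fin k → ℕ) (D : Set (Fin k → ℝ))
    (f : (Fin k → ℝ) → ℝ) : Prop :=
  ∀ (A B : ∀ i, Matrix (Fin (n i)) (Fin (n i)) ℂ)
    (hA : ∀ i, (A i).IsHermitian) (hB : ∀ i, (B i).IsHermitian)
    (_ : ∀ m : ∀ i, Fin (n i), (fun i => (hA i).eigenvalues (m i)) ∈ D)
    (_ : ∀ m : ∀ i, Fin (n i), (fun i => (hB i).eigenvalues (m i)) ∈ D)
    (a b : ℝ) (_ : 0 ≤ a) (_ : 0 ≤ b) (_ : a + b = 1)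
    (hC : ∀ i, (a • A i + b • B i).IsHermitian)
    (_ : ∀ m : ∀ i, Fin (n i), (fun i => (hC i).eigenvalues (m i)) ∈ D),
    (mvFun f hC - (a • mvFun f hA + b • mvFun f hB)).PosSemidef

/-!
Write `F = √f * √g`, `C = a • A + b • B` and `M = a • F(A) + b • F(B)`. Each block matrix
`[[f(A), F(A)], [F(A), g(A)]]` is positive, being `R Rᴴ` with `R = [[√f(A), 0], [√g(A), 0]]`;
adding the concavity gaps of `f` and `g` on the diagonal shows that `[[f(C), M], [M, g(C)]]` is
positive. Since `f(C)`, `g(C)`, `F(C)` are functions of one commuting family, `F(C)` is the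
geometric mean `f(C) # g(C)`, and `X # Y` dominates every `M` for which `[[X, M], [M, Y]]` is
positive (Schur complement, then: `S > 0` and `S - K S K ≥ 0` force `K ≤ 1`). Singular `f(C)` or
`g(C)` are handled by replacing `f, g` with `f + ε, g + ε` and letting `ε → 0`.
-/

open Filter Topology

namespace Matrix

section PiKronecker

variable {ι R : Type*} [Fintype ι] [CommSemiring R] {κ μ ν : ι → Type*}

def piKronecker (P : ∀ i, Matrix (κ i) (μ i) R) : Matrix (∀ i, κ i) (∀ i, μ i) R :=
  of fun a b => ∏ i, P i (a i) (b i)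

lemma piKronecker_mul [DecidableEq ι] [∀ i, Fintype (μ i)] (P : ∀ i, Matrix (κ i) (μ i) R)
    (Q : ∀ i, Matrix (μ i) (ν i) R) :
    piKronecker P * piKronecker Q = piKronecker fun i => P i * Q i := by
  ext a c
  simp only [piKronecker, mul_apply, of_apply, Fintype.prod_sum, Finset.prod_mul_distrib]

lemma piKronecker_one [∀ i, DecidableEq (κ i)] :
    piKronecker (fun i => (1 : Matrix (κ i) (κ i) R)) = 1 := by
  ext a b
  simp only [piKronecker, of_apply, one_apply, Finset.prod_ite_zero, Finset.prod_const_one,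
    Finset.mem_univ, true_implies, funext_iff]

lemma conjTranspose_piKronecker [StarRing R] (P : ∀ i, Matrix (κ i) (μ i) R) :
    (piKronecker P)ᴴ = piKronecker fun i => (P i)ᴴ := by
  ext a b
  simp [piKronecker, star_prod]

end PiKronecker

lemma piKronecker_mem_unitaryGroup {ι R : Type*} [Fintype ι] [DecidableEq ι] [CommRing R]
    [StarRing R] {κ : ι → Type*} [∀ i, Fintype (κ i)] [∀ i, DecidableEq (κ i)]
    {U : ∀ i, Matrix (κ i) (κ i) R} (hU : ∀ i, U i ∈ unitaryGroup (κ i) R) :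
    piKronecker U ∈ unitaryGroup (∀ i, κ i) R := by
  simp only [mem_unitaryGroup_iff, star_eq_conjTranspose, conjTranspose_piKronecker,
    piKronecker_mul] at hU ⊢
  simp only [hU, piKronecker_one]

variable {ι 𝕜 : Type*} [Fintype ι] [RCLike 𝕜]

lemma isClosed_setOf_posSemidef : IsClosed {M : Matrix ι ι 𝕜 | M.PosSemidef} := by
  simp only [posSemidef_iff_dotProduct_mulVec, Set.ofPred_and, Set.ofPred_forall]
  refine (isClosed_eq continuous_id.matrix_conjTranspose continuous_id).inter
    (isClosed_iInter fun x => isClosed_le continuous_const ?_)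
  exact continuous_const.dotProduct (continuous_id.matrix_mulVec continuous_const)

lemma PosSemidef.fromBlocks_zero_zero {κ : Type*} [Fintype κ] {X : Matrix ι ι 𝕜}
    {Y : Matrix κ κ 𝕜} (hX : X.PosSemidef) (hY : Y.PosSemidef) :
    (fromBlocks X 0 0 Y).PosSemidef := by
  refine .of_dotProduct_mulVec_nonneg (hX.1.fromBlocks (by simp) hY.1) fun v => ?_
  rw [← Sum.elim_comp_inl_inr v, fromBlocks_mulVec, Function.star_sumElim,
    sumElim_dotProduct_sumElim]
  simpa using add_nonneg (hX.dotProduct_mulVec_nonneg _) (hY.dotProduct_mulVec_nonneg _)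

lemma dotProduct_mul_mul_mulVec_of_mulVec_eq_smul {K : Matrix ι ι 𝕜} (hK : K.IsHermitian)
    (S : Matrix ι ι 𝕜) {v : ι → 𝕜} {μ : ℝ} (hv : K *ᵥ v = μ • v) :
    star v ⬝ᵥ ((K * S * K) *ᵥ v) = (μ ^ 2) • (star v ⬝ᵥ (S *ᵥ v)) := by
  have hrow : star v ᵥ* K = μ • star v := by
    rw [← hK.eq, ← star_mulVec, hv, star_smul, star_trivial]
  rw [← mulVec_mulVec, ← mulVec_mulVec, hv, mulVec_smul, dotProduct_mulVec, hrow,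
    smul_dotProduct, dotProduct_smul, smul_smul, sq]

variable [DecidableEq ι]

lemma posSemidef_one_sub_of_posSemidef_sub_mul_mul {S K : Matrix ι ι 𝕜} (hS : S.PosDef)
    (hK : K.IsHermitian) (h : (S - K * S * K).PosSemidef) : (1 - K).PosSemidef := by
  have h1K : (1 - K).IsHermitian := isHermitian_one.sub hK
  refine h1K.posSemidef_iff_eigenvalues_nonneg.mpr fun j => ?_
  set v : ι → 𝕜 := ⇑(h1K.eigenvectorBasis j)
  set ν := h1K.eigenvalues j
  have hv0 : v ≠ 0 := fun hv => h1K.eigenvectorBasis.orthonormal.ne_zero j (by ext; simp [v, hv])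
  have hKv : K *ᵥ v = (1 - ν) • v := by
    have := h1K.mulVec_eigenvectorBasis j
    rw [sub_mulVec, one_mulVec] at this
    rw [sub_smul, one_smul, ← this, sub_sub_cancel]
  have hq := h.re_dotProduct_nonneg v
  have hpos := hS.re_dotProduct_pos hv0
  rw [sub_mulVec, dotProduct_sub, dotProduct_mul_mul_mulVec_of_mulVec_eq_smul hK S hKv,
    map_sub, RCLike.smul_re] at hq
  have hν : (1 - ν) ^ 2 ≤ 1 := le_of_mul_le_mul_right (by linarith) hpos
  show 0 ≤ ν
  nlinarith

/-- `L * L` is the geometric mean of the diagonal blocks `L * S⁻¹ * L` and `L * S * L`, so this is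
the maximality of the geometric mean among off-diagonal blocks of positive block matrices. -/
lemma posSemidef_mul_self_sub_of_posSemidef_fromBlocks {L S M : Matrix ι ι 𝕜} (hL : L.PosDef)
    (hS : S.PosDef) (h : (fromBlocks (L * S⁻¹ * L) M M (L * S * L)).PosSemidef) :
    (L * L - M).PosSemidef := by
  have hLh : Lᴴ = L := hL.1
  have hM : Mᴴ = M := (isHermitian_fromBlocks_iff.mp h.1).2.1
  have hX : (L * S⁻¹ * L).PosDef := by
    simpa only [hLh] using hS.inv.conjTranspose_mul_mul_same (mulVec_injective_of_isUnit hL.isUnit)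
  have := hX.isUnit.invertible
  have hschur := (PosDef.fromBlocks₁₁ M (L * S * L) hX).mp (by rwa [hM])
  set J := L⁻¹
  have hJh : Jᴴ = J := by rw [conjTranspose_nonsing_inv, hLh]
  have hJL : J * L = 1 := nonsing_inv_mul L ((isUnit_iff_isUnit_det L).mp hL.isUnit)
  have hLJ : L * J = 1 := mul_nonsing_inv L ((isUnit_iff_isUnit_det L).mp hL.isUnit)
  have hXinv : (L * S⁻¹ * L)⁻¹ = J * S * J := by
    rw [mul_inv_rev, mul_inv_rev,
      nonsing_inv_nonsing_inv S ((isUnit_iff_isUnit_det S).mp hS.isUnit), Matrix.mul_assoc]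
  set K := J * M * J
  have hK : K.IsHermitian := by
    simp only [K, IsHermitian, conjTranspose_mul, hJh, hM, Matrix.mul_assoc]
  have hSK : (S - K * S * K).PosSemidef := by
    have e : J * (L * S * L - Mᴴ * (L * S⁻¹ * L)⁻¹ * M) * Jᴴ =
        J * L * S * (L * J) - K * S * K := by
      rw [hJh, hM, hXinv]
      simp only [K, Matrix.mul_sub, Matrix.sub_mul, Matrix.mul_assoc]
    rw [hJL, hLJ, Matrix.one_mul, Matrix.mul_one] at e
    exact e ▸ hschur.mul_mul_conjTranspose_same J
  have e : L * (1 - K) * Lᴴ = L * L - L * J * M * (J * L) := by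
    rw [hLh]
    simp only [K, Matrix.mul_sub, Matrix.sub_mul, Matrix.mul_one, Matrix.mul_assoc]
  rw [hJL, hLJ, Matrix.one_mul, Matrix.mul_one] at e
  exact e ▸ (posSemidef_one_sub_of_posSemidef_sub_mul_mul hS hK hSK).mul_mul_conjTranspose_same L

end Matrix

section MvFun

variable {k : ℕ} {n : Fin k → ℕ} {A : ∀ i, Matrix (Fin (n i)) (Fin (n i)) ℂ}
  (hA : ∀ i, (A i).IsHermitian)

noncomputable def jointEigenvalues (m : ∀ i, Fin (n i)) : Fin k → ℝ :=
  fun i => (hA i).eigenvalues (m i)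

noncomputable def jointEigenvectorUnitary : unitaryGroup (∀ i, Fin (n i)) ℂ :=
  ⟨piKronecker fun i => ((hA i).eigenvectorUnitary : Matrix (Fin (n i)) (Fin (n i)) ℂ),
    piKronecker_mem_unitaryGroup fun i => (hA i).eigenvectorUnitary.2⟩

lemma mvFun_eq_conjStarAlgAut (f : (Fin k → ℝ) → ℝ) :
    mvFun f hA = Unitary.conjStarAlgAut ℝ _ (jointEigenvectorUnitary hA)
      (diagonal fun m => (f (jointEigenvalues hA m) : ℂ)) := by
  ext a b
  simp only [mvFun, jointEigenvectorUnitary, piKronecker,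
    Unitary.conjStarAlgAut_apply, mul_apply, diagonal, Matrix.sum_apply, of_apply, smul_of,
    Pi.smul_apply, Complex.real_smul, Complex.coe_smul, IsHermitian.eigenvectorUnitary_apply,
    mul_ite, mul_zero, Finset.sum_ite_eq', Finset.mem_univ, if_true, star_apply, star_prod,
    Finset.prod_mul_distrib]
  exact Fintype.sum_congr _ _ fun m => by unfold jointEigenvalues; ring

lemma mvFun_mul (f g : (Fin k → ℝ) → ℝ) :
    mvFun f hA * mvFun g hA = mvFun (fun t => f t * g t) hA := by
  simp only [mvFun_eq_conjStarAlgAut, ← map_mul, diagonal_mul_diagonal, Complex.ofReal_mul]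

lemma mvFun_add (f g : (Fin k → ℝ) → ℝ) :
    mvFun (fun t => f t + g t) hA = mvFun f hA + mvFun g hA := by
  simp only [mvFun_eq_conjStarAlgAut, ← map_add, diagonal_add, Complex.ofReal_add]

lemma mvFun_const (c : ℝ) : mvFun (fun _ => c) hA = c • 1 := by
  have hdiag : (diagonal fun _ => (c : ℂ)) =
      algebraMap ℝ (Matrix (∀ i, Fin (n i)) (∀ i, Fin (n i)) ℂ) c :=
    (algebraMap_eq_diagonal c).symm
  rw [mvFun_eq_conjStarAlgAut, hdiag, AlgHomClass.commutes, Algebra.algebraMap_eq_smul_one]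

variable {hA} in
lemma mvFun_congr {f g : (Fin k → ℝ) → ℝ}
    (h : ∀ m, f (jointEigenvalues hA m) = g (jointEigenvalues hA m)) :
    mvFun f hA = mvFun g hA := by
  simp only [mvFun_eq_conjStarAlgAut, h]

lemma mvFun_inv {f : (Fin k → ℝ) → ℝ} (hf : ∀ m, f (jointEigenvalues hA m) ≠ 0) :
    (mvFun f hA)⁻¹ = mvFun (fun t => (f t)⁻¹) hA := by
  refine inv_eq_right_inv ?_
  rw [mvFun_mul, mvFun_congr (g := fun _ => 1) fun m => mul_inv_cancel₀ (hf m), mvFun_const,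
    one_smul]

lemma isHermitian_mvFun (f : (Fin k → ℝ) → ℝ) : (mvFun f hA).IsHermitian := by
  rw [mvFun_eq_conjStarAlgAut]
  exact IsSelfAdjoint.map
    (isHermitian_diagonal_of_self_adjoint _ (funext fun m => Complex.conj_ofReal _)) _

lemma posDef_mvFun {f : (Fin k → ℝ) → ℝ} (hf : ∀ m, 0 < f (jointEigenvalues hA m)) :
    (mvFun f hA).PosDef := by
  rw [mvFun_eq_conjStarAlgAut, Unitary.conjStarAlgAut_apply,
    IsUnit.posDef_star_right_conjugate_iff Unitary.isUnit_coe]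
  exact PosDef.diagonal fun m => Complex.zero_lt_real.mpr (hf m)

lemma tendsto_mvFun {α : Type*} {l : Filter α} {φ : α → (Fin k → ℝ) → ℝ}
    {f : (Fin k → ℝ) → ℝ}
    (h : ∀ m, Tendsto (fun x => φ x (jointEigenvalues hA m)) l (𝓝 (f (jointEigenvalues hA m)))) :
    Tendsto (fun x => mvFun (φ x) hA) l (𝓝 (mvFun f hA)) := by
  simp only [mvFun_eq_conjStarAlgAut, Unitary.conjStarAlgAut_apply]
  have hdiag : Tendsto (fun x => diagonal fun m => (φ x (jointEigenvalues hA m) : ℂ)) l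
      (𝓝 (diagonal fun m => (f (jointEigenvalues hA m) : ℂ))) :=
    continuous_id.matrix_diagonal.continuousAt.tendsto.comp
      (tendsto_pi_nhds.mpr fun m => (Complex.continuous_ofReal.tendsto _).comp (h m))
  exact ((continuous_const.matrix_mul continuous_id).matrix_mul
    continuous_const).continuousAt.tendsto.comp hdiag

end MvFun

section GeometricMean

variable {k : ℕ} {n : Fin k → ℕ} {A : ∀ i, Matrix (Fin (n i)) (Fin (n i)) ℂ}
  (hA : ∀ i, (A i).IsHermitian)

lemma posSemidef_fromBlocks_mvFun {f g : (Fin k → ℝ) → ℝ}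
    (hf : ∀ m, 0 ≤ f (jointEigenvalues hA m)) (hg : ∀ m, 0 ≤ g (jointEigenvalues hA m)) :
    (fromBlocks (mvFun f hA) (mvFun (fun t => √(f t) * √(g t)) hA)
      (mvFun (fun t => √(f t) * √(g t)) hA) (mvFun g hA)).PosSemidef := by
  set P := mvFun (fun t => √(f t)) hA
  set Q := mvFun (fun t => √(g t)) hA
  have hR : fromBlocks P 0 Q 0 * (fromBlocks P 0 Q 0)ᴴ =
      fromBlocks (mvFun f hA) (mvFun (fun t => √(f t) * √(g t)) hA)
        (mvFun (fun t => √(f t) * √(g t)) hA) (mvFun g hA) := by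
    rw [fromBlocks_conjTranspose, fromBlocks_multiply, (isHermitian_mvFun hA _).eq,
      (isHermitian_mvFun hA _).eq]
    simp only [P, Q, mvFun_mul, conjTranspose_zero, Matrix.mul_zero, add_zero]
    congr 1
    · exact mvFun_congr fun m => Real.mul_self_sqrt (hf m)
    · exact mvFun_congr fun m => mul_comm _ _
    · exact mvFun_congr fun m => Real.mul_self_sqrt (hg m)
  exact hR ▸ posSemidef_self_mul_conjTranspose _

lemma posSemidef_mvFun_mul_sub_of_posSemidef_fromBlocks {p q : (Fin k → ℝ) → ℝ}
    (hp : ∀ m, 0 < p (jointEigenvalues hA m)) (hq : ∀ m, 0 < q (jointEigenvalues hA m))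
    {M : Matrix (∀ i, Fin (n i)) (∀ i, Fin (n i)) ℂ}
    (h : (fromBlocks (mvFun (fun t => p t ^ 2) hA) M M
      (mvFun (fun t => q t ^ 2) hA)).PosSemidef) :
    (mvFun (fun t => p t * q t) hA - M).PosSemidef := by
  have hpq m : 0 < p (jointEigenvalues hA m) * q (jointEigenvalues hA m) := mul_pos (hp m) (hq m)
  set L := mvFun (fun t => √(p t * q t)) hA
  set S := mvFun (fun t => q t / p t) hA
  have hLL : L * L = mvFun (fun t => p t * q t) hA := by
    rw [mvFun_mul]
    exact mvFun_congr fun m => Real.mul_self_sqrt (hpq m).le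
  have hX : L * S⁻¹ * L = mvFun (fun t => p t ^ 2) hA := by
    rw [mvFun_inv hA fun m => (div_pos (hq m) (hp m)).ne', mvFun_mul, mvFun_mul]
    refine mvFun_congr fun m => ?_
    rw [mul_right_comm, Real.mul_self_sqrt (hpq m).le]
    field_simp [(hp m).ne', (hq m).ne']
  have hY : L * S * L = mvFun (fun t => q t ^ 2) hA := by
    rw [mvFun_mul, mvFun_mul]
    refine mvFun_congr fun m => ?_
    rw [mul_right_comm, Real.mul_self_sqrt (hpq m).le]
    field_simp [(hp m).ne']
  rw [← hLL]
  refine posSemidef_mul_self_sub_of_posSemidef_fromBlocks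
    (posDef_mvFun hA (f := fun t => √(p t * q t)) fun m => Real.sqrt_pos.mpr (hpq m))
    (posDef_mvFun hA (f := fun t => q t / p t) fun m => div_pos (hq m) (hp m)) ?_
  rwa [hX, hY]

lemma posSemidef_mvFun_sqrt_mul_sqrt_sub_of_posSemidef_fromBlocks {f g : (Fin k → ℝ) → ℝ}
    (hf : ∀ m, 0 ≤ f (jointEigenvalues hA m)) (hg : ∀ m, 0 ≤ g (jointEigenvalues hA m))
    {M : Matrix (∀ i, Fin (n i)) (∀ i, Fin (n i)) ℂ}
    (h : (fromBlocks (mvFun f hA) M M (mvFun g hA)).PosSemidef) :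
    (mvFun (fun t => √(f t) * √(g t)) hA - M).PosSemidef := by
  have hε : ∀ ε > 0, (mvFun (fun t => √(f t + ε) * √(g t + ε)) hA - M).PosSemidef := by
    intro ε hε
    have hshift : fromBlocks (mvFun (fun t => √(f t + ε) ^ 2) hA) M M
        (mvFun (fun t => √(g t + ε) ^ 2) hA) =
          fromBlocks (mvFun f hA) M M (mvFun g hA) + ε • 1 := by
      rw [mvFun_congr (f := fun t => √(f t + ε) ^ 2) (g := fun t => f t + ε)
          fun m => Real.sq_sqrt (by linarith [hf m]),
        mvFun_congr (f := fun t => √(g t + ε) ^ 2) (g := fun t => g t + ε)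
          fun m => Real.sq_sqrt (by linarith [hg m]),
        mvFun_add, mvFun_add, mvFun_const, ← fromBlocks_one, fromBlocks_smul, fromBlocks_add]
      simp
    refine posSemidef_mvFun_mul_sub_of_posSemidef_fromBlocks hA
      (fun m => Real.sqrt_pos.mpr (by linarith [hf m]))
      (fun m => Real.sqrt_pos.mpr (by linarith [hg m])) ?_
    exact hshift ▸ h.add (PosSemidef.one.smul hε.le)
  have hlim : Tendsto (fun ε => mvFun (fun t => √(f t + ε) * √(g t + ε)) hA - M) (𝓝[>] 0)
      (𝓝 (mvFun (fun t => √(f t) * √(g t)) hA - M)) := by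
    refine (tendsto_mvFun hA fun m => ?_).sub_const M
    have hcont : Continuous fun ε : ℝ =>
        √(f (jointEigenvalues hA m) + ε) * √(g (jointEigenvalues hA m) + ε) := by fun_prop
    simpa using (hcont.tendsto 0).mono_left nhdsWithin_le_nhds
  exact isClosed_setOf_posSemidef.mem_of_tendsto hlim (eventually_nhdsWithin_of_forall hε)

end GeometricMean

theorem geometric_mean_of_matrix_concave_general {k : ℕ} (n : Fin k → ℕ)
    (D : Set (Fin k → ℝ)) (f g : (Fin k → ℝ) → ℝ)
    (hf0 : ∀ t ∈ D, 0 ≤ f t) (hg0 : ∀ t ∈ D, 0 ≤ g t)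
    (hf : MatrixConcaveOn n D f) (hg : MatrixConcaveOn n D g) :
    MatrixConcaveOn n D (fun t => Real.sqrt (f t) * Real.sqrt (g t)) := by
  intro A B hA hB hDA hDB a b ha hb hab hC hDC
  set F := fun t => √(f t) * √(g t)
  have hblockA := posSemidef_fromBlocks_mvFun hA (fun m => hf0 _ (hDA m)) fun m => hg0 _ (hDA m)
  have hblockB := posSemidef_fromBlocks_mvFun hB (fun m => hf0 _ (hDB m)) fun m => hg0 _ (hDB m)
  have hgap := PosSemidef.fromBlocks_zero_zero (hf A B hA hB hDA hDB a b ha hb hab hC hDC)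
    (hg A B hA hB hDA hDB a b ha hb hab hC hDC)
  have hsplit : fromBlocks (mvFun f hC) (a • mvFun F hA + b • mvFun F hB)
      (a • mvFun F hA + b • mvFun F hB) (mvFun g hC) =
      a • fromBlocks (mvFun f hA) (mvFun F hA) (mvFun F hA) (mvFun g hA) +
      b • fromBlocks (mvFun f hB) (mvFun F hB) (mvFun F hB) (mvFun g hB) +
      fromBlocks (mvFun f hC - (a • mvFun f hA + b • mvFun f hB)) 0 0
        (mvFun g hC - (a • mvFun g hA + b • mvFun g hB)) := by
    simp only [fromBlocks_smul, fromBlocks_add, add_zero, add_sub_cancel]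
  refine posSemidef_mvFun_sqrt_mul_sqrt_sub_of_posSemidef_fromBlocks hC
    (fun m => hf0 _ (hDC m)) (fun m => hg0 _ (hDC m)) ?_
  rw [hsplit]
  exact ((hblockA.smul ha).add (hblockB.smul hb)).add hgap

/-- If `f` and `g` are non-negative and matrix concave of order `(n₁,…,n_k)` on a convex
domain `D ⊆ ℝᵏ`, then `F = f^{1/2} g^{1/2}` is matrix concave of the same order on `D`. -/
theorem geometric_mean_of_matrix_concave {k : ℕ} (n : Fin k → ℕ)
    (D : Set (Fin k → ℝ)) (hD : Convex ℝ D) (f g : (Fin k → ℝ) → ℝ)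
    (hf0 : ∀ t ∈ D, 0 ≤ f t) (hg0 : ∀ t ∈ D, 0 ≤ g t)
    (hf : MatrixConcaveOn n D f) (hg : MatrixConcaveOn n D g) :
    MatrixConcaveOn n D (fun t => Real.sqrt (f t) * Real.sqrt (g t)) :=
  geometric_mean_of_matrix_concave_general n D f g hf0 hg0 hf hg
end

section
/- Let f : D → R be defined on a convex set D ⊆ R². The function (A,B) ↦ tr(f(A,B)(K*) K) on pairs of Hermitian matrices (A,B) ∈ M_n × M_m with σ(A)×σ(B) ⊆ D is convex for every K ∈ M_{m×n} if and only if f is matrix convex of order (n,m). -/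
open Matrix
open scoped ComplexOrder

variable {n m : ℕ}

/-- Spectral projection onto the `i`-th eigenvector of a Hermitian matrix. -/
noncomputable def eigProj {n : ℕ} {A : Matrix (Fin n) (Fin n) ℂ} (hA : A.IsHermitian)
    (i : Fin n) : Matrix (Fin n) (Fin n) ℂ :=
  Matrix.vecMulVec (fun a => hA.eigenvectorBasis i a) (fun b => star (hA.eigenvectorBasis i b))

/-- The Korányi functional calculus `f(A,B) = ∑_{i,j} f(λ_i, μ_j) P_i ⊗ Q_j`
acting on the tensor product `ℂⁿ ⊗ ℂᵐ`. -/
noncomputable def calc2 (f : ℝ → ℝ → ℝ) {A : Matrix (Fin n) (Fin n) ℂ}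
    {B : Matrix (Fin m) (Fin m) ℂ} (hA : A.IsHermitian) (hB : B.IsHermitian) :
    Matrix (Fin n × Fin m) (Fin n × Fin m) ℂ :=
  ∑ i, ∑ j, (f (hA.eigenvalues i) (hB.eigenvalues j) : ℂ) •
    Matrix.of (fun a b => eigProj hA i a.1 b.1 * eigProj hB j a.2 b.2)

/-- The variant functional calculus `f(A,B)(K) = ∑_{i,j} f(λ_i, μ_j) P_i K Q_j`. -/
noncomputable def calc2v (f : ℝ → ℝ → ℝ) {A : Matrix (Fin n) (Fin n) ℂ}
    {B : Matrix (Fin m) (Fin m) ℂ} (hA : A.IsHermitian) (hB : B.IsHermitian)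
    (K : Matrix (Fin n) (Fin m) ℂ) : Matrix (Fin n) (Fin m) ℂ :=
  ∑ i, ∑ j, (f (hA.eigenvalues i) (hB.eigenvalues j) : ℂ) • (eigProj hA i * K * eigProj hB j)

/-- `(A,B)` is in the domain of `f`, i.e. `σ(A) × σ(B) ⊆ D`. -/
def InDomain (D : Set (ℝ × ℝ)) {A : Matrix (Fin n) (Fin n) ℂ} {B : Matrix (Fin m) (Fin m) ℂ}
    (hA : A.IsHermitian) (hB : B.IsHermitian) : Prop :=
  ∀ i j, (hA.eigenvalues i, hB.eigenvalues j) ∈ D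

/-- `f` is matrix convex of order `(n,m)` on `D`. -/
def MatrixConvexOn (n m : ℕ) (D : Set (ℝ × ℝ)) (f : ℝ → ℝ → ℝ) : Prop :=
  ∀ (A B : Matrix (Fin n) (Fin n) ℂ) (C E : Matrix (Fin m) (Fin m) ℂ)
    (hA : A.IsHermitian) (hB : B.IsHermitian) (hC : C.IsHermitian) (hE : E.IsHermitian)
    (_ : InDomain D hA hC) (_ : InDomain D hB hE)
    (a b : ℝ) (_ : 0 ≤ a) (_ : 0 ≤ b) (_ : a + b = 1)
    (hAB : (a • A + b • B).IsHermitian) (hCE : (a • C + b • E).IsHermitian),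
    ((a • calc2 f hA hC + b • calc2 f hB hE) - calc2 f hAB hCE).PosSemidef


/-!
Vectorizing `K` turns the trace into a quadratic form: since
`tr(P Kᴴ Q K) = ⟪vec K, (Pᵀ ⊗ Q) vec K⟫`, expanding both calculi in the spectral projections of the
second variable gives `tr(f(A,C)(Kᴴ) K) = ⟪vec K, f(Aᵀ, C) vec K⟫`. As `vec` is onto, convexity of
all these traces is positive semidefiniteness of `a f(Aᵀ,C) + b f(Bᵀ,E) - f(a Aᵀ + b Bᵀ, a C + b E)`,
which is matrix convexity evaluated at `(Aᵀ, Bᵀ, C, E)`. Transposition is an involution preserving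
Hermitian matrices and their spectra, so this ranges over all admissible data.
-/

open scoped Kronecker

namespace Matrix

section

variable {ι κ : Type*}

lemma IsHermitian.kronecker {A : Matrix ι ι ℂ} {B : Matrix κ κ ℂ} (hA : A.IsHermitian)
    (hB : B.IsHermitian) : (A ⊗ₖ B).IsHermitian := by
  rw [IsHermitian, conjTranspose_kronecker, hA.eq, hB.eq]

lemma trace_mul_conjTranspose_mul_mul_eq_dotProduct [Fintype ι] [Fintype κ]
    (P : Matrix ι ι ℂ) (Q : Matrix κ κ ℂ) (K : Matrix κ ι ℂ) :
    (P * Kᴴ * Q * K).trace = star (vec K) ⬝ᵥ (Pᵀ ⊗ₖ Q) *ᵥ vec K := by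
  rw [kronecker_mulVec_vec, transpose_transpose, star_vec_dotProduct_vec, Matrix.mul_assoc,
    Matrix.mul_assoc, trace_mul_comm, Matrix.mul_assoc, Matrix.mul_assoc]

lemma posSemidef_smul_add_smul_sub_iff [Fintype ι] {M₁ M₂ M₃ : Matrix ι ι ℂ}
    (h₁ : M₁.IsHermitian) (h₂ : M₂.IsHermitian) (h₃ : M₃.IsHermitian) (a b : ℝ) :
    (a • M₁ + b • M₂ - M₃).PosSemidef ↔ ∀ x, star x ⬝ᵥ M₃ *ᵥ x ≤
      a * (star x ⬝ᵥ M₁ *ᵥ x) + b * (star x ⬝ᵥ M₂ *ᵥ x) := by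
  have h : (a • M₁ + b • M₂ - M₃).IsHermitian :=
    (((IsSelfAdjoint.all a).smul h₁).add ((IsSelfAdjoint.all b).smul h₂)).sub h₃
  rw [posSemidef_iff_dotProduct_mulVec, and_iff_right h]
  simp only [sub_mulVec, add_mulVec, smul_mulVec, dotProduct_sub, dotProduct_add, dotProduct_smul,
    Complex.real_smul, sub_nonneg]

end

section EntrywiseConj

variable {ι : Type*} [Fintype ι] [DecidableEq ι]

noncomputable def entrywiseConj : Matrix ι ι ℂ ≃⋆ₐ[ℝ] Matrix ι ι ℂ :=
  StarAlgEquiv.ofAlgEquiv Complex.conjAe.mapMatrix fun X => by ext; simp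

lemma continuous_entrywiseConj : Continuous (entrywiseConj : Matrix ι ι ℂ → Matrix ι ι ℂ) :=
  continuous_id.matrix_map Complex.continuous_conj

lemma IsHermitian.entrywiseConj_eq_transpose {A : Matrix ι ι ℂ} (hA : A.IsHermitian) :
    entrywiseConj A = Aᵀ := by
  ext i j
  simpa [entrywiseConj] using congrFun (congrFun hA j) i

-- On Hermitian matrices transposition is `entrywiseConj`, a real star-algebra automorphism.
lemma IsHermitian.cfc_transpose {A : Matrix ι ι ℂ} (hA : A.IsHermitian) (g : ℝ → ℝ) :
    cfc g Aᵀ = (cfc g A)ᵀ := by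
  have hgA : (cfc g A).IsHermitian := cfc_predicate g A
  rw [← hA.entrywiseConj_eq_transpose, ← hgA.entrywiseConj_eq_transpose]
  exact (StarAlgHomClass.map_cfc (S := ℝ) entrywiseConj g A
    (A.finite_real_spectrum.continuousOn _) continuous_entrywiseConj).symm

lemma IsHermitian.spectrum_transpose {A : Matrix ι ι ℂ} (hA : A.IsHermitian) :
    spectrum ℝ Aᵀ = spectrum ℝ A := by
  rw [← hA.entrywiseConj_eq_transpose]
  exact AlgEquiv.spectrum_eq (entrywiseConj : Matrix ι ι ℂ ≃⋆ₐ[ℝ] _) A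

end EntrywiseConj

end Matrix

open Matrix

section KoranyiCalculus

variable {A : Matrix (Fin n) (Fin n) ℂ} {C : Matrix (Fin m) (Fin m) ℂ} (f : ℝ → ℝ → ℝ)

lemma eigProj_posSemidef (hA : A.IsHermitian) (i : Fin n) : (eigProj hA i).PosSemidef :=
  posSemidef_vecMulVec_self_star _

lemma cfc_eq_sum_smul_eigProj (hA : A.IsHermitian) (g : ℝ → ℝ) :
    cfc g A = ∑ i, (g (hA.eigenvalues i) : ℂ) • eigProj hA i := by
  ext a b
  simp only [hA.cfc_eq, IsHermitian.cfc, diagonal, Complex.coe_algebraMap, Function.comp_apply,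
    Unitary.conjStarAlgAut_apply, mul_apply, IsHermitian.eigenvectorUnitary_apply, of_apply, mul_ite,
    mul_zero, Finset.sum_ite_eq', Finset.mem_univ, ↓reduceIte, star_apply, RCLike.star_def, eigProj,
    Matrix.sum_apply, Matrix.smul_apply, vecMulVec_apply]
  exact Finset.sum_congr rfl fun j _ => by ring

lemma calc2_eq_sum_kronecker (hA : A.IsHermitian) (hC : C.IsHermitian) :
    calc2 f hA hC = ∑ j, cfc (f · (hC.eigenvalues j)) A ⊗ₖ eigProj hC j := by
  ext a b
  simp only [calc2, cfc_eq_sum_smul_eigProj hA, Matrix.sum_apply, Matrix.smul_apply, of_apply,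
    kroneckerMap_apply, Finset.sum_mul, smul_eq_mul, mul_assoc]
  exact Finset.sum_comm

lemma calc2v_eq_sum (hA : A.IsHermitian) (hC : C.IsHermitian) (K : Matrix (Fin n) (Fin m) ℂ) :
    calc2v f hA hC K = ∑ j, cfc (f · (hC.eigenvalues j)) A * K * eigProj hC j := by
  simp only [calc2v, cfc_eq_sum_smul_eigProj hA, Matrix.sum_mul, Matrix.smul_mul]
  exact Finset.sum_comm

lemma calc2_isHermitian (hA : A.IsHermitian) (hC : C.IsHermitian) :
    (calc2 f hA hC).IsHermitian := by
  rw [calc2_eq_sum_kronecker]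
  exact isSelfAdjoint_sum _ fun j _ =>
    (cfc_predicate _ A : (cfc _ A).IsHermitian).kronecker (eigProj_posSemidef hC j).isHermitian

lemma trace_calc2v_mul_eq_dotProduct {A' : Matrix (Fin n) (Fin n) ℂ} (hA : A.IsHermitian)
    (hA' : A'.IsHermitian) (hAA' : Aᵀ = A') (hC : C.IsHermitian) (K : Matrix (Fin m) (Fin n) ℂ) :
    (calc2v f hA hC Kᴴ * K).trace = star (vec K) ⬝ᵥ calc2 f hA' hC *ᵥ vec K := by
  subst hAA'
  simp only [calc2v_eq_sum, calc2_eq_sum_kronecker, Matrix.sum_mul, trace_sum, sum_mulVec,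
    dotProduct_sum, trace_mul_conjTranspose_mul_mul_eq_dotProduct, hA.cfc_transpose]

lemma InDomain.transpose_left {D : Set (ℝ × ℝ)} {hA : A.IsHermitian} {hC : C.IsHermitian}
    (h : InDomain D hA hC) (hA' : Aᵀ.IsHermitian) : InDomain D hA' hC := by
  intro i j
  obtain ⟨k, hk⟩ : hA'.eigenvalues i ∈ Set.range hA.eigenvalues := by
    rw [← hA.spectrum_real_eq_range_eigenvalues, ← hA.spectrum_transpose]
    exact hA'.eigenvalues_mem_spectrum_real i
  exact hk ▸ h k j

end KoranyiCalculus

theorem trace_convex_iff_matrix_convex_general (D : Set (ℝ × ℝ))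
    (f : ℝ → ℝ → ℝ) :
    (∀ (K : Matrix (Fin m) (Fin n) ℂ)
      (A B : Matrix (Fin n) (Fin n) ℂ) (C E : Matrix (Fin m) (Fin m) ℂ)
      (hA : A.IsHermitian) (hB : B.IsHermitian) (hC : C.IsHermitian) (hE : E.IsHermitian)
      (_ : InDomain D hA hC) (_ : InDomain D hB hE)
      (a b : ℝ) (_ : 0 ≤ a) (_ : 0 ≤ b) (_ : a + b = 1)
      (hAB : (a • A + b • B).IsHermitian) (hCE : (a • C + b • E).IsHermitian),
      (calc2v f hAB hCE Kᴴ * K).trace ≤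
        (a : ℂ) * (calc2v f hA hC Kᴴ * K).trace + (b : ℂ) * (calc2v f hB hE Kᴴ * K).trace)
    ↔ MatrixConvexOn n m D f := by
  constructor
  · intro h A B C E hA hB hC hE hAC hBE a b ha hb hab hAB hCE
    rw [posSemidef_smul_add_smul_sub_iff (calc2_isHermitian f hA hC) (calc2_isHermitian f hB hE)
      (calc2_isHermitian f hAB hCE)]
    intro x
    obtain ⟨K, rfl⟩ := vec_bijective.surjective x
    have hABt : (a • Aᵀ + b • Bᵀ).IsHermitian := by simpa using hAB.transpose
    have := h K Aᵀ Bᵀ C E hA.transpose hB.transpose hC hE (hAC.transpose_left _)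
      (hBE.transpose_left _) a b ha hb hab hABt hCE
    rwa [trace_calc2v_mul_eq_dotProduct f _ hA (transpose_transpose A),
      trace_calc2v_mul_eq_dotProduct f _ hB (transpose_transpose B),
      trace_calc2v_mul_eq_dotProduct f _ hAB (by simp)] at this
  · intro h K A B C E hA hB hC hE hAC hBE a b ha hb hab hAB hCE
    have hABt : (a • Aᵀ + b • Bᵀ).IsHermitian := by simpa using hAB.transpose
    have := (posSemidef_smul_add_smul_sub_iff (calc2_isHermitian f _ hC) (calc2_isHermitian f _ hE)
      (calc2_isHermitian f _ hCE) a b).mp (h Aᵀ Bᵀ C E hA.transpose hB.transpose hC hE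
        (hAC.transpose_left _) (hBE.transpose_left _) a b ha hb hab hABt hCE) (vec K)
    rwa [← trace_calc2v_mul_eq_dotProduct f hA _ rfl, ← trace_calc2v_mul_eq_dotProduct f hB _ rfl,
      ← trace_calc2v_mul_eq_dotProduct f hAB _ (by simp)] at this

/-- The map `(A,B) ↦ tr f(A,B)(K*) K` is convex for every `K ∈ M_{m×n}` if and only if
`f` is matrix convex of order `(n,m)`. -/
theorem trace_convex_iff_matrix_convex (D : Set (ℝ × ℝ)) (hD : Convex ℝ D)
    (f : ℝ → ℝ → ℝ) :
    (∀ (K : Matrix (Fin m) (Fin n) ℂ)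
      (A B : Matrix (Fin n) (Fin n) ℂ) (C E : Matrix (Fin m) (Fin m) ℂ)
      (hA : A.IsHermitian) (hB : B.IsHermitian) (hC : C.IsHermitian) (hE : E.IsHermitian)
      (_ : InDomain D hA hC) (_ : InDomain D hB hE)
      (a b : ℝ) (_ : 0 ≤ a) (_ : 0 ≤ b) (_ : a + b = 1)
      (hAB : (a • A + b • B).IsHermitian) (hCE : (a • C + b • E).IsHermitian),
      (calc2v f hAB hCE Kᴴ * K).trace ≤
        (a : ℂ) * (calc2v f hA hC Kᴴ * K).trace + (b : ℂ) * (calc2v f hB hE Kᴴ * K).trace)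
    ↔ MatrixConvexOn n m D f :=
  trace_convex_iff_matrix_convex_general D f
end

section
/- Fix μ_1,...,μ_k > 0 and let f(t_1,...,t_k) = ∏_{i=1}^k t_i/(t_i+μ_i) on R_+^k. Then f is concave (as a real-valued function) on the convex domain D_k(μ_1,...,μ_k), i.e., the Hessian of f is negative semidefinite at every point of D_k. -/
open Matrix

/-- The matrix `A_k(t)` with diagonal entries `2tᵢ/μᵢ` and off-diagonal entries `-1`. -/
noncomputable def Amat {k : ℕ} (μ t : Fin k → ℝ) : Matrix (Fin k) (Fin k) ℝ :=
  Matrix.of fun i j => if i = j then 2 * t i / μ i else -1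

/-- The domain `D_k(μ₁,…,μ_k)`. -/
def Dk {k : ℕ} (μ : Fin k → ℝ) : Set (Fin k → ℝ) :=
  {t | (∀ i, 0 < t i) ∧ (Amat μ t).PosSemidef}

/-!
Restrict `f` to a segment `t(r) = x + r • v` inside `D_k` and put
`wᵢ = μᵢ vᵢ / (tᵢ (tᵢ + μᵢ))`. Each factor `tᵢ / (tᵢ + μᵢ)` has logarithmic
derivative `wᵢ`, and `wᵢ' = -(2 tᵢ / μᵢ + 1) wᵢ²`, so
`(f ∘ t)'' = f · ((∑ wᵢ)² - ∑ (2 tᵢ / μᵢ + 1) wᵢ²) = -f · wᵀ A_k(t) w ≤ 0`.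
This is the Hessian identity `-A_k(t) ∘ P(t)` with `P(t) = f(t) c cᵀ`,
`cᵢ = μᵢ / (tᵢ (tᵢ + μᵢ))`, evaluated at `v`: the Schur product with a rank-one
matrix reduces to the substitution `w = c ∘ v`.
-/

theorem concaveOn_of_forall_concaveOn_segment {𝕜 E β : Type*} [Field 𝕜] [LinearOrder 𝕜]
    [IsStrictOrderedRing 𝕜] [AddCommGroup E] [Module 𝕜 E] [AddCommMonoid β] [PartialOrder β]
    [SMul 𝕜 β] {s : Set E} {f : E → β} (hs : Convex 𝕜 s)
    (h : ∀ x ∈ s, ∀ y ∈ s, ConcaveOn 𝕜 (Set.Icc 0 1) fun r : 𝕜 => f (x + r • (y - x))) :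
    ConcaveOn 𝕜 s f := by
  refine ⟨hs, fun x hx y hy a b ha hb hab => ?_⟩
  have hseg := (h x hx y hy).2 (Set.left_mem_Icc.2 zero_le_one)
    (Set.right_mem_Icc.2 zero_le_one) ha hb hab
  have hcombo : x + b • (y - x) = a • x + b • y := by
    rw [eq_sub_of_add_eq hab, sub_smul, one_smul, smul_sub]
    abel
  simpa [hcombo] using hseg

theorem HasDerivAt.fun_finsetProd_of_mul {ι 𝕜 : Type*} [NontriviallyNormedField 𝕜]
    {u : Finset ι} {f : ι → 𝕜 → 𝕜} {g : ι → 𝕜} {x : 𝕜}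
    (hf : ∀ i ∈ u, HasDerivAt (f i) (f i x * g i) x) :
    HasDerivAt (∏ i ∈ u, f i ·) ((∏ i ∈ u, f i x) * ∑ i ∈ u, g i) x := by
  classical
  refine (HasDerivAt.fun_finsetProd hf).congr_deriv ?_
  rw [Finset.mul_sum]
  refine Finset.sum_congr rfl fun i hi => ?_
  rw [smul_eq_mul, ← mul_assoc, Finset.prod_erase_mul _ _ hi]

lemma Amat_eq_diagonal_sub {k : ℕ} (μ t : Fin k → ℝ) :
    Amat μ t = diagonal (fun i => 2 * t i / μ i + 1) - of fun _ _ => 1 := by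
  ext i j
  by_cases h : i = j
  · subst h; simp [Amat]
  · simp [Amat, h]

lemma dotProduct_Amat_mulVec {k : ℕ} (μ t w : Fin k → ℝ) :
    w ⬝ᵥ Amat μ t *ᵥ w = ∑ i, (2 * t i / μ i + 1) * w i ^ 2 - (∑ i, w i) ^ 2 := by
  rw [Amat_eq_diagonal_sub, sub_mulVec, dotProduct_sub]
  simp only [dotProduct, mulVec_diagonal]
  simp only [mulVec, dotProduct, of_apply, one_mul, ← Finset.sum_mul, ← sq]
  congr 1
  exact Finset.sum_congr rfl fun i _ => by ring

lemma Amat_add_smul {k : ℕ} (μ x y : Fin k → ℝ) {a b : ℝ} (hab : a + b = 1) :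
    Amat μ (a • x + b • y) = a • Amat μ x + b • Amat μ y := by
  ext i j
  by_cases h : i = j
  · simp only [Amat, Pi.add_apply, Pi.smul_apply, smul_eq_mul, h, of_apply, ↓reduceIte, smul_of,
      Matrix.add_apply]
    ring
  · simp only [Amat, smul_of, Matrix.add_apply, of_apply, h, ↓reduceIte, Pi.smul_apply,
      smul_eq_mul, mul_neg, mul_one]
    linarith

lemma convex_Dk {k : ℕ} (μ : Fin k → ℝ) : Convex ℝ (Dk μ) := by
  intro x hx y hy a b ha hb hab
  refine ⟨fun i => convex_Ioi (0 : ℝ) (hx.1 i) (hy.1 i) ha hb hab, ?_⟩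
  rw [Amat_add_smul μ x y hab]
  exact (hx.2.smul ha).add (hy.2.smul hb)

theorem HasDerivAt.div_add_const_self {𝕜 : Type*} [NontriviallyNormedField 𝕜]
    {f : 𝕜 → 𝕜} {f' m s : 𝕜} (hf : HasDerivAt f f' s)
    (h₁ : f s ≠ 0) (h₂ : f s + m ≠ 0) :
    HasDerivAt (fun r => f r / (f r + m)) (f s / (f s + m) * (m * f' / (f s * (f s + m)))) s := by
  refine (hf.div (hf.add_const m) h₂).congr_deriv ?_
  field_simp
  ring

theorem HasDerivAt.mul_div_mul_add_const_self {𝕜 : Type*} [NontriviallyNormedField 𝕜]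
    {f : 𝕜 → 𝕜} {f' m s : 𝕜} (hf : HasDerivAt f f' s)
    (hm : m ≠ 0) (h₁ : f s ≠ 0) (h₂ : f s + m ≠ 0) :
    HasDerivAt (fun r => m * f' / (f r * (f r + m)))
      (-((2 * f s / m + 1) * (m * f' / (f s * (f s + m))) ^ 2)) s := by
  refine ((hasDerivAt_const s (m * f')).div (hf.fun_mul (hf.add_const m))
    (mul_ne_zero h₁ h₂)).congr_deriv ?_
  field_simp
  ring

noncomputable def ratioProd {k : ℕ} (μ t : Fin k → ℝ) : ℝ := ∏ i, t i / (t i + μ i)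

noncomputable def hessWeight {k : ℕ} (μ t v : Fin k → ℝ) (i : Fin k) : ℝ :=
  μ i * v i / (t i * (t i + μ i))

section line

variable {k : ℕ} {μ x v : Fin k → ℝ} {s : ℝ}

lemma hasDerivAt_add_smul_apply (i : Fin k) :
    HasDerivAt (fun r : ℝ => (x + r • v) i) (v i) s := by
  simpa using ((hasDerivAt_id s).mul_const (v i)).const_add (x i)

lemma hasDerivAt_ratioProd_line (hμ : ∀ i, 0 < μ i) (ht : ∀ i, 0 < (x + s • v) i) :
    HasDerivAt (fun r => ratioProd μ (x + r • v))
      (ratioProd μ (x + s • v) * ∑ i, hessWeight μ (x + s • v) v i) s :=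
  HasDerivAt.fun_finsetProd_of_mul fun i _ =>
    (hasDerivAt_add_smul_apply i).div_add_const_self (ht i).ne' (add_pos (ht i) (hμ i)).ne'

lemma hasDerivAt_sum_hessWeight_line (hμ : ∀ i, 0 < μ i) (ht : ∀ i, 0 < (x + s • v) i) :
    HasDerivAt (fun r => ∑ i, hessWeight μ (x + r • v) v i)
      (-∑ i, (2 * (x + s • v) i / μ i + 1) * hessWeight μ (x + s • v) v i ^ 2) s := by
  rw [← Finset.sum_neg_distrib]
  exact HasDerivAt.fun_sum fun i _ => (hasDerivAt_add_smul_apply i).mul_div_mul_add_const_self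
    (hμ i).ne' (ht i).ne' (add_pos (ht i) (hμ i)).ne'

lemma hasDerivAt_deriv_ratioProd_line (hμ : ∀ i, 0 < μ i) (ht : ∀ i, 0 < (x + s • v) i) :
    HasDerivAt (fun r => ratioProd μ (x + r • v) * ∑ i, hessWeight μ (x + r • v) v i)
      (-(ratioProd μ (x + s • v) * (hessWeight μ (x + s • v) v ⬝ᵥ
        Amat μ (x + s • v) *ᵥ hessWeight μ (x + s • v) v))) s := by
  refine ((hasDerivAt_ratioProd_line hμ ht).mul
    (hasDerivAt_sum_hessWeight_line hμ ht)).congr_deriv ?_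
  rw [dotProduct_Amat_mulVec]
  ring

end line

theorem concaveOn_ratioProd_segment {k : ℕ} {μ x y : Fin k → ℝ} (hμ : ∀ i, 0 < μ i)
    (hx : x ∈ Dk μ) (hy : y ∈ Dk μ) :
    ConcaveOn ℝ (Set.Icc (0 : ℝ) 1) fun r => ratioProd μ (x + r • (y - x)) := by
  have hmem : ∀ r ∈ Set.Icc (0 : ℝ) 1, x + r • (y - x) ∈ Dk μ :=
    fun r hr => (convex_Dk μ).add_smul_sub_mem hx hy hr
  have hint : ∀ r ∈ interior (Set.Icc (0 : ℝ) 1), x + r • (y - x) ∈ Dk μ := fun r hr =>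
    hmem r (interior_subset hr)
  refine concaveOn_of_hasDerivWithinAt2_nonpos (convex_Icc 0 1)
    (fun r hr => (hasDerivAt_ratioProd_line hμ (hmem r hr).1).continuousAt.continuousWithinAt)
    (fun r hr => (hasDerivAt_ratioProd_line hμ (hint r hr).1).hasDerivWithinAt)
    (fun r hr => (hasDerivAt_deriv_ratioProd_line hμ (hint r hr).1).hasDerivWithinAt)
    fun r hr => ?_
  have hpos := (hint r hr).1
  have hprod : 0 ≤ ratioProd μ (x + r • (y - x)) :=
    Finset.prod_nonneg fun i _ => div_nonneg (hpos i).le (add_pos (hpos i) (hμ i)).le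
  exact neg_nonpos.2 (mul_nonneg hprod ((hint r hr).2.dotProduct_mulVec_nonneg _))

/-- The function `f(t₁,…,t_k) = ∏ tᵢ/(tᵢ+μᵢ)` is concave on the convex domain `D_k`. -/
theorem concave_on_Dk {k : ℕ} (μ : Fin k → ℝ) (hμ : ∀ i, 0 < μ i) :
    ConcaveOn ℝ (Dk μ) (fun t => ∏ i, t i / (t i + μ i)) :=
  concaveOn_of_forall_concaveOn_segment (convex_Dk μ) fun _ hx _ hy =>
    concaveOn_ratioProd_segment hμ hx hy
end

section
/- The function f(t_1,...,t_k) = 1/(t_1 ··· t_k) is operator convex on R_+^k: for positive definite matrices A_1,...,A_k and B_1,...,B_k, ((A_1+B_1)/2)^{−1} ⊗ ··· ⊗ ((A_k+B_k)/2)^{−1} ≤ (A_1^{−1} ⊗ ··· ⊗ A_k^{−1} + B_1^{−1} ⊗ ··· ⊗ B_k^{−1})/2 in the Loewner order. -/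
/-
Each pair is diagonalised simultaneously by a congruence: `Aᵢ = Qᵢᴴ Qᵢ` and `Bᵢ = Qᵢᴴ Dᵢ Qᵢ` with
`Dᵢ` positive diagonal. Then `Aᵢ⁻¹`, `Bᵢ⁻¹` and `((Aᵢ + Bᵢ)/2)⁻¹` are all congruent, through the
same `Pᵢ = (Qᵢ⁻¹)ᴴ`, to diagonal matrices, and a Kronecker product of congruences is the congruence
by the Kronecker product `P`. The difference to be shown positive is therefore `Pᴴ D P` with `D`
diagonal, and its entries are nonnegative by the scalar case
`∏ ((aᵢ + bᵢ)/2)⁻¹ ≤ (∏ aᵢ⁻¹ + ∏ bᵢ⁻¹)/2`, which follows from AM–GM applied twice: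
`(∏ ((aᵢ + bᵢ)/2)⁻¹)² ≤ ∏ aᵢ⁻¹ · ∏ bᵢ⁻¹ ≤ ((∏ aᵢ⁻¹ + ∏ bᵢ⁻¹)/2)²`.
-/

open Matrix
open scoped ComplexOrder

/-- The tensor (Kronecker) product of a `k`-tuple of matrices. -/
def tensorPi {k : ℕ} {n : Fin k → ℕ} (M : ∀ i, Matrix (Fin (n i)) (Fin (n i)) ℂ) :
    Matrix (∀ i, Fin (n i)) (∀ i, Fin (n i)) ℂ :=
  Matrix.of fun a b => ∏ i, M i (a i) (b i)

section ConjDiagonal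

variable {𝕜 m n : Type*} [RCLike 𝕜] [Fintype m] [DecidableEq m]

noncomputable def conjDiagonal (P : Matrix m n 𝕜) : (m → ℝ) →ₗ[ℝ] Matrix n n 𝕜 where
  toFun u := Pᴴ * diagonal (fun a => (u a : 𝕜)) * P
  map_add' u v := by
    simp only [Pi.add_apply, RCLike.ofReal_add, ← diagonal_add, Matrix.mul_add, Matrix.add_mul]
  map_smul' c u := by
    have hcu : (fun a => ((c • u) a : 𝕜)) = c • fun a => (u a : 𝕜) :=
      funext fun a => by simp [RCLike.real_smul_eq_coe_mul]
    simp only [hcu, diagonal_smul, Matrix.mul_smul, Matrix.smul_mul, RingHom.id_apply]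

lemma conjDiagonal_apply (P : Matrix m n 𝕜) (u : m → ℝ) :
    conjDiagonal P u = Pᴴ * diagonal (fun a => (u a : 𝕜)) * P := rfl

lemma conjDiagonal_one (P : Matrix m n 𝕜) : conjDiagonal P 1 = Pᴴ * P := by
  simp [conjDiagonal_apply]

lemma conjTranspose_mul_conjDiagonal_mul [Fintype n] {l : Type*} (P : Matrix m n 𝕜)
    (R : Matrix n l 𝕜) (u : m → ℝ) : Rᴴ * conjDiagonal P u * R = conjDiagonal (P * R) u := by
  simp only [conjDiagonal_apply, conjTranspose_mul, Matrix.mul_assoc]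

lemma posSemidef_conjDiagonal [Fintype n] (P : Matrix m n 𝕜) {u : m → ℝ} (hu : 0 ≤ u) :
    (conjDiagonal P u).PosSemidef :=
  (PosSemidef.diagonal fun a => RCLike.ofReal_nonneg.mpr (hu a)).conjTranspose_mul_mul_same P

lemma inv_conjDiagonal (P : Matrix m m 𝕜) {u : m → ℝ} (hu : ∀ a, u a ≠ 0) :
    (conjDiagonal P u)⁻¹ = conjDiagonal P⁻¹ᴴ u⁻¹ := by
  have hdiag : (diagonal fun a => (u a : 𝕜))⁻¹ = diagonal fun a => ((u a)⁻¹ : 𝕜) :=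
    inv_eq_left_inv <| by
      rw [diagonal_mul_diagonal, ← diagonal_one]
      exact congrArg diagonal (funext fun a => inv_mul_cancel₀ (by exact_mod_cast hu a))
  simp only [conjDiagonal_apply, Matrix.mul_inv_rev, hdiag, conjTranspose_nonsing_inv,
    conjTranspose_conjTranspose, Pi.inv_apply, RCLike.ofReal_inv, Matrix.mul_assoc]

open scoped MatrixOrder in
theorem Matrix.PosDef.exists_simultaneous_conjDiagonal {A B : Matrix m m 𝕜} (hA : A.PosDef)
    (hB : B.PosDef) :
    ∃ (Q : Matrix m m 𝕜) (d : m → ℝ), (∀ j, 0 < d j) ∧ A = conjDiagonal Q 1 ∧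
      B = conjDiagonal Q d := by
  obtain ⟨L, rfl⟩ := CStarAlgebra.nonneg_iff_eq_star_mul_self.mp hA.posSemidef.nonneg
  have hL : IsUnit L := by
    have h := (isUnit_iff_isUnit_det _).mp hA.isUnit
    rw [det_mul] at h
    exact (isUnit_iff_isUnit_det L).mpr (isUnit_of_mul_isUnit_right h)
  have hLL : L⁻¹ * L = 1 := nonsing_inv_mul L ((isUnit_iff_isUnit_det L).mp hL)
  have hM : (star L⁻¹ * B * L⁻¹).PosDef :=
    (IsUnit.posDef_star_left_conjugate_iff (isUnit_nonsing_inv_iff.mpr hL)).mpr hB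
  set U : Matrix m m 𝕜 := ↑hM.1.eigenvectorUnitary
  have hMU : star L⁻¹ * B * L⁻¹ = conjDiagonal (star U) hM.1.eigenvalues := by
    rw [conjDiagonal_apply, ← star_eq_conjTranspose, star_star]
    exact hM.1.spectral_theorem
  refine ⟨star U * L, hM.1.eigenvalues, hM.eigenvalues_pos, ?_, ?_⟩
  · rw [← conjTranspose_mul_conjDiagonal_mul, conjDiagonal_one]
    have hU : U * star U = 1 := Unitary.mul_star_self_of_mem hM.1.eigenvectorUnitary.2
    simp only [← star_eq_conjTranspose, star_star, hU, Matrix.mul_one]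
  · rw [← conjTranspose_mul_conjDiagonal_mul, ← hMU, ← star_eq_conjTranspose]
    simp only [← Matrix.mul_assoc, ← star_mul, hLL, star_one, Matrix.one_mul]
    simp only [Matrix.mul_assoc, hLL, Matrix.mul_one]

end ConjDiagonal

theorem Real.prod_inv_add_div_two_le {ι : Type*} (s : Finset ι) {a b : ι → ℝ}
    (ha : ∀ i ∈ s, 0 < a i) (hb : ∀ i ∈ s, 0 < b i) :
    ∏ i ∈ s, ((a i + b i) / 2)⁻¹ ≤ (∏ i ∈ s, (a i)⁻¹ + ∏ i ∈ s, (b i)⁻¹) / 2 := by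
  have hsq : (∏ i ∈ s, ((a i + b i) / 2)⁻¹) ^ 2 ≤ (∏ i ∈ s, (a i)⁻¹) * ∏ i ∈ s, (b i)⁻¹ := by
    rw [← Finset.prod_pow, ← Finset.prod_mul_distrib]
    refine Finset.prod_le_prod (fun i _ => by positivity) fun i hi => ?_
    have := ha i hi
    have := hb i hi
    rw [inv_pow, ← mul_inv]
    exact inv_anti₀ (by positivity) (by nlinarith [four_mul_le_sq_add (a i) (b i)])
  have hq : 0 ≤ ∏ i ∈ s, (a i)⁻¹ := Finset.prod_nonneg fun i hi => (inv_pos.mpr (ha i hi)).le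
  have hr : 0 ≤ ∏ i ∈ s, (b i)⁻¹ := Finset.prod_nonneg fun i hi => (inv_pos.mpr (hb i hi)).le
  refine le_of_pow_le_pow_left₀ two_ne_zero (by positivity) (hsq.trans ?_)
  nlinarith [four_mul_le_sq_add (∏ i ∈ s, (a i)⁻¹) (∏ i ∈ s, (b i)⁻¹)]

section TensorPi

variable {k : ℕ} {n : Fin k → ℕ}

lemma tensorPi_mul (M N : ∀ i, Matrix (Fin (n i)) (Fin (n i)) ℂ) :
    tensorPi (fun i => M i * N i) = tensorPi M * tensorPi N := by
  ext a b
  simp only [tensorPi, of_apply, Matrix.mul_apply, Finset.prod_univ_sum, Fintype.piFinset_univ,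
    Finset.prod_mul_distrib]

lemma tensorPi_conjTranspose (M : ∀ i, Matrix (Fin (n i)) (Fin (n i)) ℂ) :
    tensorPi (fun i => (M i)ᴴ) = (tensorPi M)ᴴ := by
  ext a b
  simp only [tensorPi, of_apply, conjTranspose_apply, star_prod]

lemma tensorPi_diagonal (v : ∀ i, Fin (n i) → ℂ) :
    tensorPi (fun i => diagonal (v i)) = diagonal (fun a => ∏ i, v i (a i)) := by
  ext a b
  by_cases hab : a = b
  · simp [tensorPi, hab]
  · obtain ⟨i, hi⟩ := Function.ne_iff.mp hab
    rw [diagonal_apply_ne _ hab]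
    exact Finset.prod_eq_zero (Finset.mem_univ i) (diagonal_apply_ne _ hi)

lemma tensorPi_conjDiagonal (P : ∀ i, Matrix (Fin (n i)) (Fin (n i)) ℂ)
    (u : ∀ i, Fin (n i) → ℝ) :
    tensorPi (fun i => conjDiagonal (P i) (u i)) =
      conjDiagonal (tensorPi P) (fun a => ∏ i, u i (a i)) := by
  simp only [conjDiagonal_apply, tensorPi_mul, tensorPi_conjTranspose, tensorPi_diagonal,
    RCLike.ofReal_prod]

lemma tensorPi_inv_conjDiagonal (Q : ∀ i, Matrix (Fin (n i)) (Fin (n i)) ℂ)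
    {u : ∀ i, Fin (n i) → ℝ} (hu : ∀ i j, u i j ≠ 0) :
    tensorPi (fun i => (conjDiagonal (Q i) (u i))⁻¹) =
      conjDiagonal (tensorPi fun i => (Q i)⁻¹ᴴ) (fun a => ∏ i, (u i (a i))⁻¹) := by
  simp only [inv_conjDiagonal _ (hu _), tensorPi_conjDiagonal, Pi.inv_apply]

end TensorPi

/-- The function `(t₁,…,t_k) ↦ 1/(t₁⋯t_k)` is operator convex on the positive orthant:
`((A₁+B₁)/2)⁻¹ ⊗ ⋯ ⊗ ((A_k+B_k)/2)⁻¹ ≤ (A₁⁻¹ ⊗ ⋯ ⊗ A_k⁻¹ + B₁⁻¹ ⊗ ⋯ ⊗ B_k⁻¹)/2`. -/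
theorem operator_convexity_inverse_product {k : ℕ} {n : Fin k → ℕ}
    (A B : ∀ i, Matrix (Fin (n i)) (Fin (n i)) ℂ)
    (hA : ∀ i, (A i).PosDef) (hB : ∀ i, (B i).PosDef) :
    (((1:ℝ)/2) • (tensorPi (fun i => (A i)⁻¹) + tensorPi (fun i => (B i)⁻¹)) -
      tensorPi (fun i => (((1:ℝ)/2) • (A i + B i))⁻¹)).PosSemidef := by
  choose Q d hd hAQ hBQ using fun i => (hA i).exists_simultaneous_conjDiagonal (hB i)
  have hmid : ∀ i, ((1:ℝ)/2) • (A i + B i) = conjDiagonal (Q i) (fun j => (1 + d i j) / 2) := by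
    intro i
    rw [hAQ i, hBQ i, ← map_add, ← map_smul]
    congr 1
    ext j
    simp only [Pi.smul_apply, Pi.add_apply, Pi.one_apply, smul_eq_mul]
    ring
  simp only [hmid]
  simp only [hAQ, hBQ]
  rw [tensorPi_inv_conjDiagonal Q (u := fun _ => 1) (fun _ _ => one_ne_zero),
    tensorPi_inv_conjDiagonal Q (fun i j => (hd i j).ne'),
    tensorPi_inv_conjDiagonal Q (fun i j => by have := hd i j; positivity),
    ← map_add, ← map_smul, ← map_sub]
  refine posSemidef_conjDiagonal _ fun a => ?_
  have hscalar := Real.prod_inv_add_div_two_le Finset.univ (a := fun _ => 1)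
    (b := fun i => d i (a i)) (fun _ _ => one_pos) (fun i _ => hd i (a i))
  simp only [Pi.sub_apply, Pi.smul_apply, Pi.add_apply, smul_eq_mul, Pi.zero_apply, Pi.one_apply,
    inv_one, Finset.prod_const_one] at hscalar ⊢
  linarith
end

section
/- The harmonic mean characterization: for positive definite operators A, B on a Hilbert space, the 2×2 block operator inequality [[C, C],[C, C]] ≤ 2[[A, 0],[0, B]] holds for a self-adjoint C if and only if C ≤ 2(A^{−1}+B^{−1})^{−1}; in particular, the harmonic mean 2(A^{−1}+B^{−1})^{−1} is the maximum such C. -/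
open Matrix
open scoped ComplexOrder

/-- Harmonic mean characterization: `[[C,C],[C,C]] ≤ 2[[A,0],[0,B]]` holds for a
Hermitian `C` iff `C ≤ 2(A⁻¹+B⁻¹)⁻¹`; in particular the harmonic mean is the maximal
such `C`. -/
theorem harmonic_mean_characterization {n : ℕ}
    (A B C : Matrix (Fin n) (Fin n) ℂ) (hA : A.PosDef) (hB : B.PosDef)
    (hC : C.IsHermitian) :
    ((2:ℂ) • Matrix.fromBlocks A 0 0 B - Matrix.fromBlocks C C C C).PosSemidef ↔
      ((2:ℂ) • (A⁻¹ + B⁻¹)⁻¹ - C).PosSemidef := by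
  set S : Matrix (Fin n) (Fin n) ℂ := A + B with hS
  have hSpd : S.PosDef := hA.add hB
  haveI := hA.isUnit.invertible
  haveI := hB.isUnit.invertible
  haveI := hSpd.isUnit.invertible
  -- key scalar identity: A⁻¹ + B⁻¹ = A⁻¹ S B⁻¹ = B⁻¹ S A⁻¹
  have hsum : A⁻¹ + B⁻¹ = A⁻¹ * S * B⁻¹ := by
    have h1 : A⁻¹ * S * B⁻¹ = A⁻¹ * A * B⁻¹ + A⁻¹ * (B * B⁻¹) := by
      rw [hS]; noncomm_ring
    rw [h1, Matrix.inv_mul_of_invertible, Matrix.mul_inv_of_invertible,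
      Matrix.one_mul, Matrix.mul_one]
    exact add_comm _ _
  have hsum' : A⁻¹ + B⁻¹ = B⁻¹ * S * A⁻¹ := by
    have h1 : B⁻¹ * S * A⁻¹ = B⁻¹ * (A * A⁻¹) + B⁻¹ * B * A⁻¹ := by
      rw [hS]; noncomm_ring
    rw [h1, Matrix.inv_mul_of_invertible, Matrix.mul_inv_of_invertible,
      Matrix.one_mul, Matrix.mul_one]
    exact add_comm _ _
  have hK : (A⁻¹ + B⁻¹)⁻¹ = B * S⁻¹ * A := by
    rw [hsum, Matrix.mul_inv_rev, Matrix.mul_inv_rev,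
      Matrix.inv_inv_of_invertible, Matrix.inv_inv_of_invertible, Matrix.mul_assoc]
  have hK' : (A⁻¹ + B⁻¹)⁻¹ = A * S⁻¹ * B := by
    rw [hsum', Matrix.mul_inv_rev, Matrix.mul_inv_rev,
      Matrix.inv_inv_of_invertible, Matrix.inv_inv_of_invertible, Matrix.mul_assoc]
  have hcomm : A * S⁻¹ * B = B * S⁻¹ * A := by rw [← hK', hK]
  -- congruence matrices
  set T : Matrix (Fin n ⊕ Fin n) (Fin n ⊕ Fin n) ℂ :=
    fromBlocks (S⁻¹ * A) (-(S⁻¹ * B)) 1 1 with hT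
  set Ti : Matrix (Fin n ⊕ Fin n) (Fin n ⊕ Fin n) ℂ :=
    fromBlocks 1 (S⁻¹ * B) (-1) (S⁻¹ * A) with hTi
  set N : Matrix (Fin n ⊕ Fin n) (Fin n ⊕ Fin n) ℂ :=
    fromBlocks ((2:ℂ) • S) 0 0 ((2:ℂ) • (A⁻¹ + B⁻¹)⁻¹ - C) with hN
  have hTTi : T * Ti = 1 := by
    rw [hT, hTi, fromBlocks_multiply, ← fromBlocks_one, fromBlocks_inj]
    refine ⟨?_, ?_, ?_, ?_⟩
    · rw [Matrix.mul_one, Matrix.mul_neg, Matrix.neg_mul, Matrix.mul_one, neg_neg,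
        ← Matrix.mul_add, ← hS, Matrix.inv_mul_of_invertible]
    · have h1 : S⁻¹ * A * (S⁻¹ * B) = S⁻¹ * (A * S⁻¹ * B) := by noncomm_ring
      rw [h1, hcomm]
      noncomm_ring
    · rw [Matrix.one_mul, Matrix.one_mul, add_neg_cancel]
    · rw [Matrix.one_mul, Matrix.one_mul, ← Matrix.mul_add, add_comm, ← hS,
        Matrix.inv_mul_of_invertible]
  -- hermitian facts
  have hSi : S⁻¹.IsHermitian := hSpd.1.inv
  have hASi : (S⁻¹ * A)ᴴ = A * S⁻¹ := by
    rw [Matrix.conjTranspose_mul, hA.1.eq, hSi.eq]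
  have hBSi : (S⁻¹ * B)ᴴ = B * S⁻¹ := by
    rw [Matrix.conjTranspose_mul, hB.1.eq, hSi.eq]
  have hTH : Tᴴ = fromBlocks (A * S⁻¹) 1 (-(B * S⁻¹)) 1 := by
    rw [hT, fromBlocks_conjTranspose, Matrix.conjTranspose_neg, hASi, hBSi,
      Matrix.conjTranspose_one]
  -- auxiliary block computations
  have hASA : A * (S⁻¹ * A) + A * (S⁻¹ * B) = A := by
    rw [← Matrix.mul_add, ← Matrix.mul_add, ← hS, Matrix.inv_mul_of_invertible,
      Matrix.mul_one]
  have hBSB : B * (S⁻¹ * B) + B * (S⁻¹ * A) = B := by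
    rw [← Matrix.mul_add, ← Matrix.mul_add, show B + A = S by rw [hS, add_comm],
      Matrix.inv_mul_of_invertible, Matrix.mul_one]
  -- the key congruence identity
  have key : (2:ℂ) • fromBlocks A 0 0 B - fromBlocks C C C C = Tᴴ * N * T := by
    rw [hTH, hN, hT, hK', fromBlocks_multiply, fromBlocks_multiply, fromBlocks_smul]
    rw [show (fromBlocks ((2:ℂ) • A) ((2:ℂ) • (0 : Matrix (Fin n) (Fin n) ℂ))
        ((2:ℂ) • (0 : Matrix (Fin n) (Fin n) ℂ)) ((2:ℂ) • B)) - fromBlocks C C C C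
        = fromBlocks ((2:ℂ) • A - C) (-C) (-C) ((2:ℂ) • B - C) by
      rw [sub_eq_add_neg, fromBlocks_neg, fromBlocks_add]
      congr 1 <;> simp [sub_eq_add_neg]]
    rw [fromBlocks_inj]
    refine ⟨?_, ?_, ?_, ?_⟩ <;>
      simp only [Matrix.mul_zero, Matrix.zero_mul, Matrix.mul_one, Matrix.one_mul,
        add_zero, zero_add, Matrix.neg_mul, Matrix.mul_neg, neg_neg,
        Matrix.smul_mul, Matrix.mul_smul, Matrix.mul_assoc, smul_neg,
        Matrix.inv_mul_cancel_left_of_invertible]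
    · -- top-left
      conv_lhs => rw [← hASA]
      rw [smul_add]; abel
    · -- top-right
      abel
    · -- bottom-left
      rw [show A * (S⁻¹ * B) = B * (S⁻¹ * A) by
        rw [← Matrix.mul_assoc, ← Matrix.mul_assoc]; exact hcomm]
      abel
    · -- bottom-right
      rw [show A * (S⁻¹ * B) = B * (S⁻¹ * A) by
        rw [← Matrix.mul_assoc, ← Matrix.mul_assoc]; exact hcomm]
      conv_lhs => rw [← hBSB]
      rw [smul_add]; abel
  -- positivity of the (1,1) block of N
  have h2S : ((2:ℂ) • S).PosDef := by
    rw [two_smul]; exact hSpd.add hSpd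
  haveI := h2S.isUnit.invertible
  have hNiff : N.PosSemidef ↔ ((2:ℂ) • (A⁻¹ + B⁻¹)⁻¹ - C).PosSemidef := by
    have h0 : N = fromBlocks ((2:ℂ) • S) 0 ((0 : Matrix (Fin n) (Fin n) ℂ))ᴴ
        ((2:ℂ) • (A⁻¹ + B⁻¹)⁻¹ - C) := by
      rw [hN]; simp
    rw [h0, Matrix.PosDef.fromBlocks₁₁ _ _ h2S]
    simp
  rw [key, ← hNiff]
  constructor
  · intro h
    have h2 : (Tiᴴ * (Tᴴ * N * T) * Ti).PosSemidef := h.conjTranspose_mul_mul_same Ti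
    have e : Tiᴴ * (Tᴴ * N * T) * Ti = (T * Ti)ᴴ * N * (T * Ti) := by
      rw [Matrix.conjTranspose_mul]
      noncomm_ring
    rwa [e, hTTi, Matrix.conjTranspose_one, Matrix.one_mul, Matrix.mul_one] at h2
  · intro h
    exact h.conjTranspose_mul_mul_same T
end

section
/- The block inequality for inverses: for positive definite operators A, B, the block operator [[(A+B)^{−1}, (A+B)^{−1}],[(A+B)^{−1}, (A+B)^{−1}]] is ≤ [[A^{−1}, 0],[0, B^{−1}]] in the Loewner order on H ⊕ H. -/
/-!
With `J = [[1], [1]]`, the block matrix `[[A⁻¹, 0, 1], [0, B⁻¹, 1], [1, 1, A + B]]` has Schur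
complement `(A + B) - Jᴴ diag(A, B) J = 0` with respect to its upper-left block
`diag(A⁻¹, B⁻¹)`, so it is positive semidefinite; its Schur complement with respect to the
lower-right block `A + B` is the difference in question, which is therefore positive
semidefinite as well.
-/

open Matrix
open scoped ComplexOrder

namespace Matrix

variable {m k 𝕜 : Type*} [Fintype m] [Fintype k] [DecidableEq m] [DecidableEq k] [RCLike 𝕜]

theorem PosDef.fromBlocks_zero {A : Matrix m m 𝕜} {B : Matrix k k 𝕜} (hA : A.PosDef)
    (hB : B.PosDef) : (fromBlocks A 0 0 B).PosDef := by
  have : Invertible A := hA.isUnit.invertible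
  have hpsd : (fromBlocks A 0 0ᴴ B).PosSemidef :=
    (PosDef.fromBlocks₁₁ _ _ hA).mpr (by simpa using hB.posSemidef)
  rw [conjTranspose_zero] at hpsd
  exact hpsd.posDef_iff_isUnit.mpr (isUnit_fromBlocks_zero₂₁.mpr ⟨hA.isUnit, hB.isUnit⟩)

theorem posSemidef_inv_sub_mul_inv_mul_conjTranspose_iff {P : Matrix m m 𝕜} {Q : Matrix k k 𝕜}
    (hP : P.PosDef) (hQ : Q.PosDef) (J : Matrix m k 𝕜) :
    (P⁻¹ - J * Q⁻¹ * Jᴴ).PosSemidef ↔ (Q - Jᴴ * P * J).PosSemidef := by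
  have : Invertible P := hP.isUnit.invertible
  have : Invertible Q := hQ.isUnit.invertible
  rw [← PosDef.fromBlocks₂₂ _ _ hQ, PosDef.fromBlocks₁₁ _ _ hP.inv, inv_inv_of_invertible]

end Matrix

/-- Block inequality for inverses: for positive definite `A, B`,
`[[(A+B)⁻¹,(A+B)⁻¹],[(A+B)⁻¹,(A+B)⁻¹]] ≤ [[A⁻¹,0],[0,B⁻¹]]` in the Loewner order. -/
theorem block_inequality_for_inverses {n : ℕ}
    (A B : Matrix (Fin n) (Fin n) ℂ) (hA : A.PosDef) (hB : B.PosDef) :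
    (Matrix.fromBlocks A⁻¹ 0 0 B⁻¹ -
      Matrix.fromBlocks (A + B)⁻¹ (A + B)⁻¹ (A + B)⁻¹ (A + B)⁻¹).PosSemidef := by
  set J : Matrix (Fin n ⊕ Fin n) (Fin n) ℂ := fromRows 1 1
  have hinv : (fromBlocks A 0 0 B)⁻¹ = fromBlocks A⁻¹ 0 0 B⁻¹ := by
    simp [inv_fromBlocks_zero₂₁_of_isUnit_iff, hA.isUnit, hB.isUnit]
  have hJQJ : J * (A + B)⁻¹ * Jᴴ = fromBlocks (A + B)⁻¹ (A + B)⁻¹ (A + B)⁻¹ (A + B)⁻¹ := by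
    simp [J, conjTranspose_fromRows_eq_fromCols_conjTranspose]
  have hJPJ : Jᴴ * fromBlocks A 0 0 B * J = A + B := by
    simp [J, conjTranspose_fromRows_eq_fromCols_conjTranspose, fromCols_mul_fromBlocks,
      fromCols_mul_fromRows]
  rw [← hinv, ← hJQJ, posSemidef_inv_sub_mul_inv_mul_conjTranspose_iff (hA.fromBlocks_zero hB)
    (hA.add hB), hJPJ, sub_self]
  exact .zero
end

section
/- For fixed u, v > 0, the map (A, K) ↦ tr((A+u)^{−1} K* (B+v)^{−1} K) is jointly convex in (A, K) for each fixed positive semidefinite B, where A ranges over positive semidefinite operators and K over all operators on a finite-dimensional Hilbert space. -/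
/-!
For positive definite `A`, the block matrix `[[A, K*], [K, K A⁻¹ K*]]` is positive semidefinite,
since its Schur complement vanishes. Averaging two such block matrices gives a positive
semidefinite matrix whose Schur complement shows `K̄ Ā⁻¹ K̄* ≤ (K₁ A₁⁻¹ K₁* + K₂ A₂⁻¹ K₂*) / 2`
in the Loewner order. Pairing with the positive semidefinite `(B + v)⁻¹` under the trace is
monotone, and cyclicity of the trace turns `tr((A + u)⁻¹ K* (B + v)⁻¹ K)` into
`tr((B + v)⁻¹ K (A + u)⁻¹ K*)`.
-/

open Matrix
open scoped ComplexOrder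

namespace Matrix

open scoped MatrixOrder

variable {𝕜 m n : Type*} [RCLike 𝕜]

theorem convex_setOf_posDef : Convex ℝ {A : Matrix n n 𝕜 | A.PosDef} := by
  intro A hA B hB a b ha hb hab
  rcases ha.eq_or_lt with rfl | ha
  · simp only [zero_smul, zero_add, (zero_add b ▸ hab : b = 1), one_smul]
    exact hB
  · exact (hA.smul ha).add_posSemidef (hB.posSemidef.smul hb)

variable [Fintype m] [Fintype n] [DecidableEq n]

theorem PosDef.posSemidef_fromBlocks_mul_inv_mul_conjTranspose {A : Matrix n n 𝕜}
    (hA : A.PosDef) (K : Matrix m n 𝕜) : (fromBlocks A Kᴴ K (K * A⁻¹ * Kᴴ)).PosSemidef := by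
  have := hA.isUnit.invertible
  simpa using (hA.fromBlocks₁₁ Kᴴ (K * A⁻¹ * Kᴴ)).mpr (by simpa using PosSemidef.zero)

theorem PosDef.mul_inv_mul_conjTranspose_le_of_posSemidef_fromBlocks {A : Matrix n n 𝕜}
    (hA : A.PosDef) {K : Matrix m n 𝕜} {D : Matrix m m 𝕜}
    (h : (fromBlocks A Kᴴ K D).PosSemidef) : K * A⁻¹ * Kᴴ ≤ D := by
  have := hA.isUnit.invertible
  rw [le_iff]
  simpa using (hA.fromBlocks₁₁ Kᴴ D).mp (by simpa using h)

theorem convexOn_mul_inv_mul_conjTranspose :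
    ConvexOn ℝ {p : Matrix n n 𝕜 × Matrix m n 𝕜 | p.1.PosDef} (fun p => p.2 * p.1⁻¹ * p.2ᴴ) := by
  refine ⟨(convex_setOf_posDef (𝕜 := 𝕜) (n := n)).linear_preimage
    (LinearMap.fst ℝ _ (Matrix m n 𝕜)), ?_⟩
  rintro ⟨A₁, K₁⟩ hA₁ ⟨A₂, K₂⟩ hA₂ a b ha hb hab
  have hA : (a • A₁ + b • A₂).PosDef := convex_setOf_posDef hA₁ hA₂ ha hb hab
  refine hA.mul_inv_mul_conjTranspose_le_of_posSemidef_fromBlocks ?_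
  have h := ((hA₁.posSemidef_fromBlocks_mul_inv_mul_conjTranspose K₁).smul ha).add
    ((hA₂.posSemidef_fromBlocks_mul_inv_mul_conjTranspose K₂).smul hb)
  simpa [fromBlocks_smul, fromBlocks_add, conjTranspose_add, conjTranspose_smul] using h

theorem PosSemidef.trace_mul_nonneg {M X : Matrix n n 𝕜} (hM : M.PosSemidef)
    (hX : X.PosSemidef) : 0 ≤ (M * X).trace := by
  obtain ⟨B, rfl⟩ := CStarAlgebra.nonneg_iff_eq_star_mul_self.mp hM.nonneg
  rw [trace_mul_cycle, trace_mul_cycle, star_eq_conjTranspose]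
  exact (hX.mul_mul_conjTranspose_same B).trace_nonneg

theorem PosSemidef.trace_mul_le_trace_mul {M X Y : Matrix n n 𝕜} (hM : M.PosSemidef)
    (h : X ≤ Y) : (M * X).trace ≤ (M * Y).trace := by
  simpa [mul_sub, trace_sub] using hM.trace_mul_nonneg h

end Matrix

/-- For fixed `u, v > 0` and a fixed positive semidefinite `B`, the map
`(A, K) ↦ tr((A+u)⁻¹ K* (B+v)⁻¹ K)` is jointly convex in `(A, K)` on positive
semidefinite `A` and arbitrary `K`. -/
theorem trace_resolvent_jointly_convex_in_A_K {n : ℕ} (u v : ℝ) (hu : 0 < u) (hv : 0 < v)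
    (B : Matrix (Fin n) (Fin n) ℂ) (hB : B.PosSemidef)
    (A₁ A₂ : Matrix (Fin n) (Fin n) ℂ) (hA₁ : A₁.PosSemidef) (hA₂ : A₂.PosSemidef)
    (K₁ K₂ : Matrix (Fin n) (Fin n) ℂ) :
    (((((1:ℝ)/2) • (A₁ + A₂) + (u:ℂ) • 1)⁻¹) *
          (((1:ℂ)/2) • (K₁ + K₂))ᴴ * (B + (v:ℂ) • 1)⁻¹ * (((1:ℂ)/2) • (K₁ + K₂))).trace ≤
      ((1:ℂ)/2) * (((A₁ + (u:ℂ) • 1)⁻¹ * K₁ᴴ * (B + (v:ℂ) • 1)⁻¹ * K₁).trace +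
        ((A₂ + (u:ℂ) • 1)⁻¹ * K₂ᴴ * (B + (v:ℂ) • 1)⁻¹ * K₂).trace) := by
  have hI {w : ℝ} (hw : 0 < w) : ((w:ℂ) • (1 : Matrix (Fin n) (Fin n) ℂ)).PosDef :=
    PosDef.one.smul (by exact_mod_cast hw)
  set R := (B + (v:ℂ) • 1)⁻¹
  have hR : R.PosSemidef := (PosDef.posSemidef_add hB (hI hv)).inv.posSemidef
  have hcyc (X K : Matrix (Fin n) (Fin n) ℂ) :
      (X * Kᴴ * R * K).trace = (R * (K * X * Kᴴ)).trace := by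
    rw [trace_mul_cycle (X * Kᴴ), trace_mul_comm, mul_assoc K]
  have h₁ : (A₁ + (u:ℂ) • 1, K₁).1.PosDef := PosDef.posSemidef_add hA₁ (hI hu)
  have h₂ : (A₂ + (u:ℂ) • 1, K₂).1.PosDef := PosDef.posSemidef_add hA₂ (hI hu)
  have hconv := convexOn_mul_inv_mul_conjTranspose.2 h₁ h₂ (by norm_num : (0:ℝ) ≤ 1/2)
    (by norm_num : (0:ℝ) ≤ 1/2) (add_halves 1)
  have hA : ((1:ℝ)/2) • (A₁ + (u:ℂ) • 1) + ((1:ℝ)/2) • (A₂ + (u:ℂ) • 1) =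
      ((1:ℝ)/2) • (A₁ + A₂) + (u:ℂ) • 1 := by module
  have hK : ((1:ℝ)/2) • K₁ + ((1:ℝ)/2) • K₂ = ((1:ℂ)/2) • (K₁ + K₂) := by module
  simp only [Prod.smul_mk, Prod.mk_add_mk, hA, hK] at hconv
  rw [hcyc, hcyc, hcyc]
  refine (hR.trace_mul_le_trace_mul hconv).trans_eq ?_
  simp [mul_add, trace_add, trace_smul]
end

section
/- (Lieb–Ruskai) The map (A, K) ↦ K* A^{−1} K is jointly convex in the Loewner order: for positive definite A_1, A_2 and arbitrary matrices K_1, K_2, ((K_1+K_2)/2)* ((A_1+A_2)/2)^{−1} ((K_1+K_2)/2) ≤ (K_1* A_1^{−1} K_1 + K_2* A_2^{−1} K_2)/2. -/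
open Matrix
open scoped ComplexOrder

/-!
For positive definite `A`, the block matrix `[[A, K], [Kᴴ, Kᴴ A⁻¹ K]]` is positive semidefinite,
and by the Schur complement criterion `Kᴴ A⁻¹ K` is the least `D` making `[[A, K], [Kᴴ, D]]`
positive semidefinite. Adding the block matrices for `(A₁, K₁)` and `(A₂, K₂)` therefore shows
that `(A, K) ↦ Kᴴ A⁻¹ K` is subadditive; being homogeneous of degree one, it is jointly convex.
-/

namespace Matrix

variable {m n 𝕜 : Type*} [Fintype m] [DecidableEq m] [Field 𝕜] [StarRing 𝕜]

theorem conjTranspose_smul_mul_inv_smul_mul_smul {c : 𝕜} (hc : IsSelfAdjoint c) (hc₀ : c ≠ 0)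
    (A : Matrix m m 𝕜) (K : Matrix m n 𝕜) :
    (c • K)ᴴ * (c • A)⁻¹ * (c • K) = c • (Kᴴ * A⁻¹ * K) := by
  by_cases hA : IsUnit A.det
  · have := invertibleOfNonzero hc₀
    rw [inv_smul _ c hA, invOf_eq_inv, conjTranspose_smul, hc.star_eq]
    simp [smul_smul, hc₀]
  · have hcA : ¬IsUnit (c • A).det := by simpa [det_smul, hc₀] using hA
    simp [nonsing_inv_apply_not_isUnit _ hA, nonsing_inv_apply_not_isUnit _ hcA]

variable [Fintype n] [PartialOrder 𝕜] [StarOrderedRing 𝕜]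

theorem PosDef.posSemidef_fromBlocks_conjTranspose_mul_inv_mul {A : Matrix m m 𝕜}
    (hA : A.PosDef) (K : Matrix m n 𝕜) :
    (fromBlocks A K Kᴴ (Kᴴ * A⁻¹ * K)).PosSemidef := by
  have := hA.isUnit.invertible
  rw [hA.fromBlocks₁₁, sub_self]
  exact .zero

theorem PosDef.posSemidef_sub_conjTranspose_add_mul_inv_add_mul_add {A₁ A₂ : Matrix m m 𝕜}
    (hA₁ : A₁.PosDef) (hA₂ : A₂.PosDef) (K₁ K₂ : Matrix m n 𝕜) :
    (K₁ᴴ * A₁⁻¹ * K₁ + K₂ᴴ * A₂⁻¹ * K₂ - (K₁ + K₂)ᴴ * (A₁ + A₂)⁻¹ * (K₁ + K₂)).PosSemidef := by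
  have hA := hA₁.add hA₂
  have := hA.isUnit.invertible
  rw [← hA.fromBlocks₁₁, conjTranspose_add, ← fromBlocks_add]
  exact (hA₁.posSemidef_fromBlocks_conjTranspose_mul_inv_mul K₁).add
    (hA₂.posSemidef_fromBlocks_conjTranspose_mul_inv_mul K₂)

end Matrix

/-- Lieb–Ruskai: the map `(A, K) ↦ K* A⁻¹ K` is jointly convex in the Loewner order. -/
theorem lieb_ruskai_joint_convexity {n m : ℕ}
    (A₁ A₂ : Matrix (Fin n) (Fin n) ℂ) (hA₁ : A₁.PosDef) (hA₂ : A₂.PosDef)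
    (K₁ K₂ : Matrix (Fin n) (Fin m) ℂ) :
    (((1:ℂ)/2) • (K₁ᴴ * A₁⁻¹ * K₁ + K₂ᴴ * A₂⁻¹ * K₂) -
      (((1:ℂ)/2) • (K₁ + K₂))ᴴ * (((1:ℝ)/2) • (A₁ + A₂))⁻¹ *
        (((1:ℂ)/2) • (K₁ + K₂))).PosSemidef := by
  have hhalf : IsSelfAdjoint ((1:ℂ)/2) := by simp [IsSelfAdjoint]
  have hA : ((1:ℝ)/2) • (A₁ + A₂) = ((1:ℂ)/2) • (A₁ + A₂) := by
    rw [← Complex.coe_smul]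
    norm_num
  rw [hA, conjTranspose_smul_mul_inv_smul_mul_smul hhalf (by norm_num), ← smul_sub]
  exact (hA₁.posSemidef_sub_conjTranspose_add_mul_inv_add_mul_add hA₂ K₁ K₂).smul
    (by rw [Complex.le_def]; norm_num)
end
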